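/- Fix λ ∈ ℝ and set r_k = e^{λ2^{−k−1}}, α_k = 1/((r_k^{−1}+r_k)(r_k^{−1/2}+r_k^{1/2})), β_k = ((r_k^{−1/2}+r_k^{1/2})² − 1)/((r_k^{−1}+r_k)(r_k^{−1/2}+r_k^{1/2})). For k ≥ 1, let a^{[k]} be the mask supported on four consecutive integers with entries (α_k − 1/k, β_k − r_k/k, β_k + 1/(k r_k²), α_k + 1/(k r_k)), and let a be the quadratic B-spline mask with entries (1/4, 3/4, 3/4, 1/4) on the same support. Then lim_{k→∞} ‖a^{[k]} − a‖ = 0 (so the non-stationary scheme {S_{a^{[k]}}} is asymptotically similar to the quadratic B-spline scheme {S_a}), but Σ_{k≥1} ‖a^{[k]} − a‖ = ∞ (so the two schemes are not asymptotically equivalent). -/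

import Mathlib

open Filter Topology

noncomputable section

/-- `r_k = e^{λ2^{−k−1}}`. -/
def rK (lam : ℝ) (k : ℕ) : ℝ := Real.exp (lam * (2 : ℝ) ^ (-(k : ℤ) - 1))

/-- `α_k = 1/((r_k^{−1}+r_k)(r_k^{−1/2}+r_k^{1/2}))`. -/
def alphaK (lam : ℝ) (k : ℕ) : ℝ :=
  1 / (((rK lam k)⁻¹ + rK lam k) * ((Real.sqrt (rK lam k))⁻¹ + Real.sqrt (rK lam k)))

/-- `β_k = ((r_k^{−1/2}+r_k^{1/2})² − 1)/((r_k^{−1}+r_k)(r_k^{−1/2}+r_k^{1/2}))`. -/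
def betaK (lam : ℝ) (k : ℕ) : ℝ :=
  (((Real.sqrt (rK lam k))⁻¹ + Real.sqrt (rK lam k)) ^ 2 - 1) /
    (((rK lam k)⁻¹ + rK lam k) * ((Real.sqrt (rK lam k))⁻¹ + Real.sqrt (rK lam k)))

/-- The level-`k` mask of Remark 3.9, supported on the four consecutive integers `0,1,2,3`,
with entries `(α_k − 1/k, β_k − r_k/k, β_k + 1/(k r_k²), α_k + 1/(k r_k))`. -/
def exMask (lam : ℝ) (k : ℕ) : ℤ → ℝ := fun i =>
  if i = 0 then alphaK lam k - 1 / (k : ℝ)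
  else if i = 1 then betaK lam k - rK lam k / (k : ℝ)
  else if i = 2 then betaK lam k + 1 / ((k : ℝ) * (rK lam k) ^ 2)
  else if i = 3 then alphaK lam k + 1 / ((k : ℝ) * rK lam k)
  else 0

/-- The quadratic B-spline mask `(1/4, 3/4, 3/4, 1/4)` on the same support `{0,1,2,3}`. -/
def bspline2Mask : ℤ → ℝ := fun i =>
  if i = 0 then 1 / 4
  else if i = 1 then 3 / 4
  else if i = 2 then 3 / 4
  else if i = 3 then 1 / 4
  else 0


lemma rK_pos (lam : ℝ) (k : ℕ) : 0 < rK lam k := Real.exp_pos _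

lemma rK_tendsto (lam : ℝ) : Tendsto (fun k => rK lam k) atTop (nhds 1) := by
  have h2 : Tendsto (fun k : ℕ => (2 : ℝ) ^ (-(k : ℤ) - 1)) atTop (nhds 0) := by
    have heq : ∀ k : ℕ, (2 : ℝ) ^ (-(k : ℤ) - 1) = (1 / 2 : ℝ) ^ (k + 1) := by
      intro k
      rw [one_div, inv_pow, ← zpow_natCast (2 : ℝ) (k + 1), ← zpow_neg]
      congr 1
      push_cast; ring
    simp_rw [heq]
    exact (tendsto_pow_atTop_nhds_zero_of_lt_one (by norm_num) (by norm_num)).comp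
      (tendsto_add_atTop_nat 1)
  have h3 : Tendsto (fun k : ℕ => lam * (2 : ℝ) ^ (-(k : ℤ) - 1)) atTop (nhds 0) := by
    simpa using h2.const_mul lam
  have := (Real.continuous_exp.tendsto 0).comp h3
  simpa [rK, Function.comp_def] using this

lemma sqrt_rK_tendsto (lam : ℝ) :
    Tendsto (fun k => Real.sqrt (rK lam k)) atTop (nhds 1) := by
  have := (Real.continuous_sqrt.tendsto 1).comp (rK_tendsto lam)
  simpa [Function.comp_def] using this

lemma denom_tendsto (lam : ℝ) :
    Tendsto (fun k => ((rK lam k)⁻¹ + rK lam k) *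
      ((Real.sqrt (rK lam k))⁻¹ + Real.sqrt (rK lam k))) atTop (nhds 4) := by
  have hr := rK_tendsto lam
  have hs := sqrt_rK_tendsto lam
  have h1 : Tendsto (fun k => (rK lam k)⁻¹ + rK lam k) atTop (nhds 2) := by
    have := (hr.inv₀ one_ne_zero).add hr
    rwa [show ((1 : ℝ)⁻¹ + 1) = 2 by norm_num] at this
  have h2 : Tendsto (fun k => (Real.sqrt (rK lam k))⁻¹ + Real.sqrt (rK lam k))
      atTop (nhds 2) := by
    have := (hs.inv₀ one_ne_zero).add hs
    rwa [show ((1 : ℝ)⁻¹ + 1) = 2 by norm_num] at this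
  have := h1.mul h2
  rwa [show ((2 : ℝ) * 2) = 4 by norm_num] at this

lemma alphaK_tendsto (lam : ℝ) : Tendsto (fun k => alphaK lam k) atTop (nhds (1 / 4)) := by
  have := (tendsto_const_nhds (x := (1 : ℝ))).div (denom_tendsto lam) (by norm_num)
  exact this

lemma betaK_tendsto (lam : ℝ) : Tendsto (fun k => betaK lam k) atTop (nhds (3 / 4)) := by
  have hs := sqrt_rK_tendsto lam
  have h2 : Tendsto (fun k => (Real.sqrt (rK lam k))⁻¹ + Real.sqrt (rK lam k))
      atTop (nhds 2) := by
    have := (hs.inv₀ one_ne_zero).add hs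
    rwa [show ((1 : ℝ)⁻¹ + 1) = 2 by norm_num] at this
  have hnum : Tendsto (fun k => ((Real.sqrt (rK lam k))⁻¹ + Real.sqrt (rK lam k)) ^ 2 - 1)
      atTop (nhds 3) := by
    have := (h2.pow 2).sub (tendsto_const_nhds (x := (1 : ℝ)))
    rwa [show ((2 : ℝ) ^ 2 - 1) = 3 by norm_num] at this
  have := hnum.div (denom_tendsto lam) (by norm_num)
  exact this

/-- Remark 3.9: the non-stationary scheme with masks `a^{[k]}`, `k ≥ 1`,
is asymptotically similar to the quadratic B-spline scheme, i.e. `‖a^{[k]} − a‖_∞ → 0`,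
but not asymptotically equivalent to it: `Σ_{k≥1} ‖a^{[k]} − a‖_∞ = ∞`. -/
theorem asymp_similar_not_asymp_equivalent (lam : ℝ) :
    Tendsto (fun k : ℕ => ⨆ i : ℤ, |exMask lam (k + 1) i - bspline2Mask i|)
      atTop (nhds 0) ∧
    ¬ Summable (fun k : ℕ => ⨆ i : ℤ, |exMask lam (k + 1) i - bspline2Mask i|) := by
  have sh : Tendsto (fun k : ℕ => k + 1) atTop atTop := tendsto_add_atTop_nat 1
  have hr : Tendsto (fun k : ℕ => rK lam (k + 1)) atTop (nhds 1) := (rK_tendsto lam).comp sh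
  have ha : Tendsto (fun k : ℕ => alphaK lam (k + 1)) atTop (nhds (1 / 4)) :=
    (alphaK_tendsto lam).comp sh
  have hb : Tendsto (fun k : ℕ => betaK lam (k + 1)) atTop (nhds (3 / 4)) :=
    (betaK_tendsto lam).comp sh
  have hinv : Tendsto (fun k : ℕ => 1 / (((k : ℝ)) + 1)) atTop (nhds 0) :=
    tendsto_one_div_add_atTop_nhds_zero_nat
  -- the four entry differences tend to zero
  have h0' : Tendsto (fun k : ℕ => alphaK lam (k + 1) - 1 / ((k + 1 : ℕ) : ℝ) - 1 / 4)
      atTop (nhds 0) := by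
    have h := (ha.sub hinv).sub (tendsto_const_nhds (x := (1 / 4 : ℝ)))
    rw [show ((1 / 4 : ℝ) - 0 - 1 / 4) = 0 by norm_num] at h
    refine h.congr fun k => ?_
    push_cast; ring
  have h1' : Tendsto
      (fun k : ℕ => betaK lam (k + 1) - rK lam (k + 1) / ((k + 1 : ℕ) : ℝ) - 3 / 4)
      atTop (nhds 0) := by
    have hd : Tendsto (fun k : ℕ => rK lam (k + 1) / ((k + 1 : ℕ) : ℝ)) atTop (nhds 0) := by
      have h := hr.mul hinv
      rw [show ((1 : ℝ) * 0) = 0 by norm_num] at h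
      refine h.congr fun k => ?_
      push_cast; ring
    have h := (hb.sub hd).sub (tendsto_const_nhds (x := (3 / 4 : ℝ)))
    rwa [show ((3 / 4 : ℝ) - 0 - 3 / 4) = 0 by norm_num] at h
  have h2' : Tendsto (fun k : ℕ =>
      betaK lam (k + 1) + 1 / (((k + 1 : ℕ) : ℝ) * (rK lam (k + 1)) ^ 2) - 3 / 4)
      atTop (nhds 0) := by
    have hd : Tendsto (fun k : ℕ => 1 / (((k + 1 : ℕ) : ℝ) * (rK lam (k + 1)) ^ 2))
        atTop (nhds 0) := by
      have h := hinv.mul ((hr.pow 2).inv₀ (by norm_num))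
      rw [show ((0 : ℝ) * ((1 : ℝ) ^ 2)⁻¹) = 0 by norm_num] at h
      refine h.congr fun k => ?_
      have hrne : rK lam (k + 1) ≠ 0 := (rK_pos lam (k + 1)).ne'
      have hn : ((k : ℝ) + 1) ≠ 0 := by positivity
      push_cast
      field_simp
    have h := (hb.add hd).sub (tendsto_const_nhds (x := (3 / 4 : ℝ)))
    rwa [show ((3 / 4 : ℝ) + 0 - 3 / 4) = 0 by norm_num] at h
  have h3' : Tendsto (fun k : ℕ =>
      alphaK lam (k + 1) + 1 / (((k + 1 : ℕ) : ℝ) * rK lam (k + 1)) - 1 / 4)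
      atTop (nhds 0) := by
    have hd : Tendsto (fun k : ℕ => 1 / (((k + 1 : ℕ) : ℝ) * rK lam (k + 1)))
        atTop (nhds 0) := by
      have h := hinv.mul (hr.inv₀ one_ne_zero)
      rw [show ((0 : ℝ) * (1 : ℝ)⁻¹) = 0 by norm_num] at h
      refine h.congr fun k => ?_
      have hrne : rK lam (k + 1) ≠ 0 := (rK_pos lam (k + 1)).ne'
      have hn : ((k : ℝ) + 1) ≠ 0 := by positivity
      push_cast
      field_simp
    have h := (ha.add hd).sub (tendsto_const_nhds (x := (1 / 4 : ℝ)))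
    rwa [show ((1 / 4 : ℝ) + 0 - 1 / 4) = 0 by norm_num] at h
  -- entry values
  have e0 : ∀ k : ℕ, exMask lam (k + 1) 0 - bspline2Mask 0
      = alphaK lam (k + 1) - 1 / ((k + 1 : ℕ) : ℝ) - 1 / 4 := by
    intro k; simp only [exMask, bspline2Mask]; norm_num
  have e1 : ∀ k : ℕ, exMask lam (k + 1) 1 - bspline2Mask 1
      = betaK lam (k + 1) - rK lam (k + 1) / ((k + 1 : ℕ) : ℝ) - 3 / 4 := by
    intro k; simp only [exMask, bspline2Mask]; norm_num
  have e2 : ∀ k : ℕ, exMask lam (k + 1) 2 - bspline2Mask 2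
      = betaK lam (k + 1) + 1 / (((k + 1 : ℕ) : ℝ) * (rK lam (k + 1)) ^ 2) - 3 / 4 := by
    intro k; simp only [exMask, bspline2Mask]; norm_num
  have e3 : ∀ k : ℕ, exMask lam (k + 1) 3 - bspline2Mask 3
      = alphaK lam (k + 1) + 1 / (((k + 1 : ℕ) : ℝ) * rK lam (k + 1)) - 1 / 4 := by
    intro k; simp only [exMask, bspline2Mask]; norm_num
  set g : ℕ → ℤ → ℝ := fun k i => |exMask lam (k + 1) i - bspline2Mask i| with hgdef
  have hE0 : Tendsto (fun k : ℕ => g k 0) atTop (nhds 0) := by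
    simp only [hgdef]; simp_rw [e0]
    simpa using h0'.abs
  have hE1 : Tendsto (fun k : ℕ => g k 1) atTop (nhds 0) := by
    simp only [hgdef]; simp_rw [e1]
    simpa using h1'.abs
  have hE2 : Tendsto (fun k : ℕ => g k 2) atTop (nhds 0) := by
    simp only [hgdef]; simp_rw [e2]
    simpa using h2'.abs
  have hE3 : Tendsto (fun k : ℕ => g k 3) atTop (nhds 0) := by
    simp only [hgdef]; simp_rw [e3]
    simpa using h3'.abs
  set S : ℕ → ℝ := fun k => g k 0 + g k 1 + g k 2 + g k 3 with hSdef
  have hkey : ∀ k : ℕ, ∀ i : ℤ, g k i ≤ S k := by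
    intro k i
    have n0 : (0 : ℝ) ≤ g k 0 := abs_nonneg _
    have n1 : (0 : ℝ) ≤ g k 1 := abs_nonneg _
    have n2 : (0 : ℝ) ≤ g k 2 := abs_nonneg _
    have n3 : (0 : ℝ) ≤ g k 3 := abs_nonneg _
    by_cases hi0 : i = 0
    · subst hi0; simp only [hSdef]; linarith
    by_cases hi1 : i = 1
    · subst hi1; simp only [hSdef]; linarith
    by_cases hi2 : i = 2
    · subst hi2; simp only [hSdef]; linarith
    by_cases hi3 : i = 3
    · subst hi3; simp only [hSdef]; linarith
    have hz : g k i = 0 := by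
      simp [hgdef, exMask, bspline2Mask, hi0, hi1, hi2, hi3]
    rw [hz]; simp only [hSdef]; linarith
  have hbdd : ∀ k : ℕ, BddAbove (Set.range (g k)) := by
    intro k
    exact ⟨S k, by rintro x ⟨i, rfl⟩; exact hkey k i⟩
  have hS : Tendsto S atTop (nhds 0) := by
    have h := ((hE0.add hE1).add hE2).add hE3
    rwa [show ((0 : ℝ) + 0 + 0 + 0) = 0 by norm_num] at h
  constructor
  · apply squeeze_zero (g := S)
    · intro k
      exact le_trans (abs_nonneg _) (le_ciSup (hbdd k) (0 : ℤ))
    · intro k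
      exact ciSup_le (hkey k)
    · exact hS
  · intro hsum
    have hle : ∀ k : ℕ, 1 / (2 * ((k + 1 : ℕ) : ℝ)) ≤ ⨆ i : ℤ, g k i := by
      intro k
      have hsup0 := le_ciSup (hbdd k) (0 : ℤ)
      have hsup3 := le_ciSup (hbdd k) (3 : ℤ)
      have hg0 : -(alphaK lam (k + 1) - 1 / ((k + 1 : ℕ) : ℝ) - 1 / 4) ≤ g k 0 := by
        show _ ≤ |exMask lam (k + 1) 0 - bspline2Mask 0|
        rw [e0 k]
        exact neg_le_abs _
      have hg3 : alphaK lam (k + 1) + 1 / (((k + 1 : ℕ) : ℝ) * rK lam (k + 1)) - 1 / 4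
          ≤ g k 3 := by
        show _ ≤ |exMask lam (k + 1) 3 - bspline2Mask 3|
        rw [e3 k]
        exact le_abs_self _
      have hrp : 0 < rK lam (k + 1) := rK_pos lam (k + 1)
      have hn : (0 : ℝ) < ((k + 1 : ℕ) : ℝ) := by positivity
      have hpos : 0 ≤ 1 / (((k + 1 : ℕ) : ℝ) * rK lam (k + 1)) := by positivity
      have hsum2 : 1 / ((k + 1 : ℕ) : ℝ) ≤ g k 0 + g k 3 := by linarith
      have hhalf : 1 / (2 * ((k + 1 : ℕ) : ℝ)) ≤ (g k 0 + g k 3) / 2 := by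
        rw [div_le_div_iff₀ (by positivity) (by norm_num)]
        have hone : 1 / ((k + 1 : ℕ) : ℝ) * ((k + 1 : ℕ) : ℝ) = 1 := by field_simp
        nlinarith [mul_le_mul_of_nonneg_right hsum2 (le_of_lt hn)]
      have hmax : (g k 0 + g k 3) / 2 ≤ ⨆ i : ℤ, g k i := by
        rcases le_total (g k 0) (g k 3) with h | h
        · linarith
        · linarith
      linarith
    have hsmall : Summable (fun k : ℕ => 1 / (2 * ((k + 1 : ℕ) : ℝ))) :=
      Summable.of_nonneg_of_le (fun k => by positivity) hle hsum
    have h2 : Summable (fun k : ℕ => 1 / ((k + 1 : ℕ) : ℝ)) := by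
      have h := hsmall.mul_left 2
      refine h.congr fun k => ?_
      have hn : ((k + 1 : ℕ) : ℝ) ≠ 0 := by positivity
      field_simp
    exact Real.not_summable_one_div_natCast ((summable_nat_add_iff 1).mp h2)

end
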